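/- arXiv:1210.6954 — 5 statements merged into one kernel-verified Lean document; each statement's English description precedes it below -/
import Mathlib

section
/- Let n, α, r be positive integers, δ ≥ 2 an integer, q ≥ 2 an integer, and let C be a code of length n over the alphabet F_q^α with |C| ≥ 2 that has (r, δ) locality. Set 𝓜 = log_q |C| (a real number). Then the minimum distance of C satisfies d_min(C) ≤ n − ⌈𝓜/α⌉ + 1 − (⌈𝓜/(r·α)⌉ − 1)·(δ − 1), where ⌈·⌉ denotes the ceiling of a real number. (This holds for arbitrary, possibly non-linear, codes.) -/
/-! Framework for (vector) codes of length `n` over an alphabet `A`: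
codewords are functions `Fin n → A`, `puncture` restricts codewords to a subset of
coordinates, `minDist` is the minimum Hamming distance between distinct codewords, and
`HasLocality C r δ` is the `(r, δ)` locality property. -/

/-- The punctured code `C|_S`: restrictions of the codewords of `C` to `S`. -/
def puncture {n : ℕ} {A : Type*} (C : Set (Fin n → A)) (S : Finset (Fin n)) :
    Set (↥S → A) :=
  (fun c => fun i : ↥S => c i) '' C

/-- Minimum (Hamming) distance of a code: the least Hamming distance between two
distinct codewords. -/
noncomputable def minDist {n : ℕ} {A : Type*} [DecidableEq A] (C : Set (Fin n → A)) : ℕ :=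
  sInf {d | ∃ c ∈ C, ∃ c' ∈ C, c ≠ c' ∧ hammingDist c c' = d}

/-- `C` has `(r, δ)` locality: every coordinate `i` lies in a set `Γ` of at most
`r + δ - 1` coordinates such that the punctured code `C|_Γ` has minimum distance at
least `δ` (i.e. any two distinct restricted codewords are at Hamming distance ≥ δ). -/
def HasLocality {n : ℕ} {A : Type*} [DecidableEq A] (C : Set (Fin n → A)) (r δ : ℕ) :
    Prop :=
  ∀ i : Fin n, ∃ Γ : Finset (Fin n), i ∈ Γ ∧ Γ.card ≤ r + δ - 1 ∧
    ∀ u ∈ puncture C Γ, ∀ v ∈ puncture C Γ, u ≠ v → δ ≤ hammingDist u v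

/-!
Write `N(S)` for the number of distinct restrictions of codewords to the coordinates `S`, and
`Q = q^α`. If `N(S) < |C|`, two codewords agree on `S`, so `d_min ≤ n - |S|`; it remains to find
a large such `S`. Since `C|_{Γ(i)}` has minimum distance `δ`, any `δ - 1` coordinates of `Γ(i)`
are determined on `C` by the others. Hence adding `Γ(i)` to `S` does not increase `N` when it
brings fewer than `δ` new coordinates, and otherwise multiplies `N` by at most `Q^p` while adding
`p + (δ - 1)` coordinates, where `p ≤ r`. Choosing `S` as large as possible at each stage,
`⌈𝓜/(rα)⌉ - 1` groups of the second kind can be added while `N(S) < |C|`, and then single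
coordinates until `log_Q N(S)` reaches `⌈𝓜/α⌉ - 1`.
-/

open Finset

section Puncture

variable {ι A : Type*} [DecidableEq A]

def punctureCard (C : Finset (ι → A)) (S : Finset ι) : ℕ :=
  #(C.image S.restrict)

theorem punctureCard_univ [Fintype ι] (C : Finset (ι → A)) : punctureCard C univ = #C :=
  card_image_of_injective _ fun _ _ h => funext fun x => congrFun h ⟨x, mem_univ x⟩

theorem punctureCard_empty_le_one (C : Finset (ι → A)) : punctureCard C ∅ ≤ 1 :=
  card_le_one_of_subsingleton _

theorem punctureCard_union_le [DecidableEq ι] [Fintype A] (C : Finset (ι → A))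
    (S U : Finset ι) :
    punctureCard C (S ∪ U) ≤ punctureCard C S * Fintype.card A ^ #U := by
  calc punctureCard C (S ∪ U) ≤ #(C.image S.restrict ×ˢ (univ : Finset (U → A))) := by
        refine card_le_card_of_injOn
          (fun u => (restrict₂ (π := fun _ => A) subset_union_left u,
            restrict₂ (π := fun _ => A) subset_union_right u)) ?_ ?_
        · rintro _ hu
          obtain ⟨c, hc, rfl⟩ := mem_image.1 hu
          exact mem_product.2 ⟨mem_image_of_mem _ hc, mem_univ _⟩
        · intro u _ v _ huv
          funext x
          rcases mem_union.1 x.2 with hx | hx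
          · exact congrFun (Prod.ext_iff.1 huv).1 ⟨x, hx⟩
          · exact congrFun (Prod.ext_iff.1 huv).2 ⟨x, hx⟩
    _ = punctureCard C S * Fintype.card A ^ #U := by simp [punctureCard, card_product]

end Puncture

theorem hammingDist_le_card_of_forall_notMem_eq {ι : Type*} [Fintype ι] {β : ι → Type*}
    [∀ i, DecidableEq (β i)] {x y : ∀ i, β i} (D : Finset ι) (h : ∀ i ∉ D, x i = y i) :
    hammingDist x y ≤ #D :=
  card_le_card fun i hi => by_contra fun hiD => (mem_filter.1 hi).2 (h i hiD)

section Locality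

variable {n : ℕ} {A : Type*} [DecidableEq A] {C : Finset (Fin n → A)}

theorem minDist_add_card_le_of_punctureCard_lt {S : Finset (Fin n)}
    (h : punctureCard C S < #C) : minDist (C : Set (Fin n → A)) + #S ≤ n := by
  obtain ⟨c, hc, c', hc', hne, heq⟩ :=
    exists_ne_map_eq_of_card_lt_of_maps_to h fun c hc => mem_image_of_mem S.restrict hc
  have hdist : hammingDist c c' ≤ #Sᶜ :=
    hammingDist_le_card_of_forall_notMem_eq _ fun i hi =>
      congrFun heq ⟨i, by simpa using hi⟩
  have hmin : minDist (C : Set (Fin n → A)) ≤ hammingDist c c' :=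
    Nat.sInf_le ⟨c, hc, c', hc', hne, rfl⟩
  have hS := card_le_univ S
  simp only [card_compl, Fintype.card_fin] at hdist hS
  omega

theorem minDist_add_le_of_punctureCard_mul_lt [Fintype A] (hA : 0 < Fintype.card A)
    {S : Finset (Fin n)} {t : ℕ} (h : punctureCard C S * Fintype.card A ^ t < #C) :
    minDist (C : Set (Fin n → A)) + (#S + t) ≤ n := by
  by_cases ht : t ≤ #Sᶜ
  · obtain ⟨U, hU, rfl⟩ := exists_subset_card_eq ht
    have hSU : Disjoint S U := disjoint_of_subset_right hU disjoint_compl_right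
    rw [← card_union_of_disjoint hSU]
    exact minDist_add_card_le_of_punctureCard_lt ((punctureCard_union_le C S U).trans_lt h)
  · have hall := punctureCard_union_le C S Sᶜ
    rw [union_compl, punctureCard_univ] at hall
    have := Nat.mul_le_mul_left (punctureCard C S)
      (Nat.pow_le_pow_right hA (by omega : #Sᶜ ≤ t))
    omega

theorem punctureCard_union_le_union_sdiff {δ : ℕ} {Γ : Finset (Fin n)}
    (hΓ : ∀ u ∈ puncture (C : Set (Fin n → A)) Γ, ∀ v ∈ puncture (C : Set (Fin n → A)) Γ,
      u ≠ v → δ ≤ hammingDist u v)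
    {D : Finset (Fin n)} (hD : #D < δ) (S : Finset (Fin n)) :
    punctureCard C (S ∪ Γ) ≤ punctureCard C (S ∪ (Γ \ D)) := by
  refine card_le_card_of_injOn
    (restrict₂ (π := fun _ => A) (union_subset_union_right sdiff_subset)) ?_ ?_
  · rintro _ hu
    obtain ⟨c, hc, rfl⟩ := mem_image.1 hu
    exact mem_image_of_mem _ hc
  · rintro _ hu _ hv huv
    obtain ⟨c, hc, rfl⟩ := mem_image.1 hu
    obtain ⟨c', hc', rfl⟩ := mem_image.1 hv
    have hagree : ∀ x ∈ S ∪ (Γ \ D), c x = c' x := fun x hx => congrFun huv ⟨x, hx⟩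
    have hΓeq : Γ.restrict c = Γ.restrict c' := by
      by_contra hne
      have hdist : hammingDist (Γ.restrict c) (Γ.restrict c') ≤ #D :=
        (hammingDist_le_card_of_forall_notMem_eq (D.subtype (· ∈ Γ)) fun x hx =>
          hagree x (mem_union_right _ (mem_sdiff.2 ⟨x.2, by simpa using hx⟩))).trans
          (by rw [card_subtype]; exact card_filter_le _ _)
      have hδle : δ ≤ hammingDist (Γ.restrict c) (Γ.restrict c') :=
        hΓ _ ⟨c, hc, rfl⟩ _ ⟨c', hc', rfl⟩ hne
      omega
    funext x
    rcases mem_union.1 x.2 with hx | hx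
    · exact hagree x (mem_union_left _ hx)
    · exact congrFun hΓeq ⟨x, hx⟩

variable [Fintype A] {r δ : ℕ}

theorem HasLocality.exists_ssuperset (hloc : HasLocality (C : Set (Fin n → A)) r δ)
    (hδ : 1 ≤ δ) {S : Finset (Fin n)} (hS : S ≠ univ) :
    ∃ T, S ⊂ T ∧ (punctureCard C T ≤ punctureCard C S ∨
      ∃ p ≤ r, punctureCard C T ≤ punctureCard C S * Fintype.card A ^ p ∧
        #S + p + (δ - 1) ≤ #T) := by
  obtain ⟨i, hiS⟩ : ∃ i, i ∉ S := by simpa [eq_univ_iff_forall] using hS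
  obtain ⟨Γ, hiΓ, hΓcard, hΓ⟩ := hloc i
  have hST : S ⊂ S ∪ Γ :=
    (ssubset_iff_of_subset subset_union_left).2 ⟨i, mem_union_right _ hiΓ, hiS⟩
  have hcard : #(S ∪ Γ) = #S + #(Γ \ S) := by
    rw [← union_sdiff_self_eq_union, card_union_of_disjoint disjoint_sdiff]
  have hΓS : #(Γ \ S) ≤ #Γ := card_le_card sdiff_subset
  obtain ⟨D, hDsub, hDcard⟩ := exists_subset_card_eq (min_le_left #(Γ \ S) (δ - 1))
  have hgrow : punctureCard C (S ∪ Γ) ≤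
      punctureCard C S * Fintype.card A ^ (#(Γ \ S) - #D) := by
    calc punctureCard C (S ∪ Γ)
        ≤ punctureCard C (S ∪ (Γ \ D)) :=
          punctureCard_union_le_union_sdiff hΓ (by omega) S
      _ = punctureCard C (S ∪ ((Γ \ S) \ D)) := by
          congr 1
          ext x
          simp only [mem_union, mem_sdiff]
          tauto
      _ ≤ _ := by
          rw [← card_sdiff_of_subset hDsub]
          exact punctureCard_union_le C S _
  refine ⟨S ∪ Γ, hST, ?_⟩
  rcases le_or_gt #(Γ \ S) (δ - 1) with hsmall | hbig
  · left
    simpa [hDcard, min_eq_left hsmall] using hgrow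
  · right
    rw [hDcard, min_eq_right hbig.le] at hgrow
    exact ⟨#(Γ \ S) - (δ - 1), by omega, hgrow, by omega⟩

theorem HasLocality.exists_punctureCard_le_pow
    (hloc : HasLocality (C : Set (Fin n → A)) r δ) (hδ : 1 ≤ δ) (hA : 0 < Fintype.card A)
    (j : ℕ) (hj : Fintype.card A ^ (j * r) < #C) :
    ∃ S k, punctureCard C S ≤ Fintype.card A ^ k ∧ k ≤ j * r ∧ k + j * (δ - 1) ≤ #S := by
  induction j with
  | zero => exact ⟨∅, 0, by simpa using punctureCard_empty_le_one C, by simp, by simp⟩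
  | succ j ih =>
    classical
    have hpow : Fintype.card A ^ (j * r) ≤ Fintype.card A ^ ((j + 1) * r) :=
      Nat.pow_le_pow_right hA (Nat.mul_le_mul_right r j.le_succ)
    obtain ⟨S, hSgood, hSmax⟩ := exists_max_image
      {S | ∃ k, punctureCard C S ≤ Fintype.card A ^ k ∧ k ≤ j * r ∧ k + j * (δ - 1) ≤ #S}
      card (by
        obtain ⟨S, hS⟩ := ih (hpow.trans_lt hj)
        exact ⟨S, by simpa using hS⟩)
    obtain ⟨k, hk, hkj, hkS⟩ := (mem_filter.1 hSgood).2
    have hS : S ≠ univ := by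
      rintro rfl
      rw [punctureCard_univ] at hk
      have := Nat.pow_le_pow_right hA hkj
      omega
    obtain ⟨T, hST, hsame | ⟨p, hpr, hT, hTcard⟩⟩ := hloc.exists_ssuperset hδ hS
    · have hTS : #T ≤ #S :=
        hSmax T (by simpa using ⟨k, hsame.trans hk, hkj, hkS.trans (card_le_card hST.le)⟩)
      exact absurd (card_lt_card hST) hTS.not_gt
    · refine ⟨T, k + p, ?_, by rw [add_one_mul]; omega, ?_⟩
      · calc punctureCard C T ≤ punctureCard C S * Fintype.card A ^ p := hT
          _ ≤ Fintype.card A ^ k * Fintype.card A ^ p := Nat.mul_le_mul_right _ hk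
          _ = Fintype.card A ^ (k + p) := (pow_add _ _ _).symm
      · rw [add_one_mul]
        omega

theorem HasLocality.minDist_add_le (hloc : HasLocality (C : Set (Fin n → A)) r δ)
    (hδ : 1 ≤ δ) (hA : 0 < Fintype.card A) {a t : ℕ} (ha : Fintype.card A ^ a < #C)
    (ht : Fintype.card A ^ (t * r) < #C) :
    minDist (C : Set (Fin n → A)) + (a + t * (δ - 1)) ≤ n := by
  obtain ⟨S, k, hSk, hk, hkS⟩ := hloc.exists_punctureCard_le_pow hδ hA t ht
  have hmax : Fintype.card A ^ max k a < #C := by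
    rcases max_choice k a with h | h <;> rw [h]
    · exact (Nat.pow_le_pow_right hA hk).trans_lt ht
    · exact ha
  have hS : punctureCard C S * Fintype.card A ^ (max k a - k) < #C := by
    calc punctureCard C S * Fintype.card A ^ (max k a - k)
        ≤ Fintype.card A ^ k * Fintype.card A ^ (max k a - k) :=
          Nat.mul_le_mul_right _ hSk
      _ = Fintype.card A ^ max k a := by
          rw [← pow_add, Nat.add_sub_cancel' (le_max_left k a)]
      _ < #C := hmax
  have := minDist_add_le_of_punctureCard_mul_lt hA hS
  omega

end Locality

theorem exists_natCast_lt_and_ceil_eq_add_one {y : ℝ} (hy : 0 < y) :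
    ∃ a : ℕ, (a : ℝ) < y ∧ ⌈y⌉ = a + 1 := by
  obtain ⟨a, ha⟩ := Int.eq_ofNat_of_zero_le (sub_nonneg.2 (Int.one_le_ceil_iff.2 hy))
  have hceil : ⌈y⌉ = a + 1 := by omega
  refine ⟨a, ?_, hceil⟩
  have := Int.ceil_lt_add_one y
  rw [hceil] at this
  push_cast at this
  linarith

theorem pow_lt_of_lt_logb {b m x : ℕ} (hb : 1 < b) (hx : 0 < x)
    (h : (m : ℝ) < Real.logb b x) : b ^ m < x := by
  rw [Real.lt_logb_iff_rpow_lt (by exact_mod_cast hb) (by exact_mod_cast hx),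
    Real.rpow_natCast] at h
  exact_mod_cast h

theorem lrc_minimum_distance_bound_general
    {F : Type} [Fintype F] [DecidableEq F]
    (n α r δ q : ℕ) (hα : 0 < α) (hr : 0 < r) (hδ : 2 ≤ δ) (hq : 2 ≤ q)
    (hF : Fintype.card F = q)
    (C : Finset (Fin n → (Fin α → F))) (hC : 2 ≤ C.card)
    (hloc : HasLocality (↑C : Set (Fin n → (Fin α → F))) r δ) :
    (minDist (↑C : Set (Fin n → (Fin α → F))) : ℝ) ≤
      (n : ℝ) - ((⌈Real.logb q C.card / α⌉ : ℤ) : ℝ) + 1 -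
        (((⌈Real.logb q C.card / (r * α)⌉ : ℤ) : ℝ) - 1) * ((δ : ℝ) - 1) := by
  have hαR : (0 : ℝ) < α := by exact_mod_cast hα
  have hrR : (0 : ℝ) < r := by exact_mod_cast hr
  have hM : 0 < Real.logb q C.card :=
    Real.logb_pos (by exact_mod_cast hq) (by exact_mod_cast hC)
  obtain ⟨a, ha, hceil_a⟩ := exists_natCast_lt_and_ceil_eq_add_one (div_pos hM hαR)
  obtain ⟨t, ht, hceil_t⟩ :=
    exists_natCast_lt_and_ceil_eq_add_one (div_pos hM (mul_pos hrR hαR))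
  have hcard : Fintype.card (Fin α → F) = q ^ α := by simp [hF]
  have hbound := hloc.minDist_add_le (by omega) (by rw [hcard]; positivity) (a := a) (t := t)
    (by
      rw [hcard, ← pow_mul]
      refine pow_lt_of_lt_logb hq (by omega) ?_
      rw [lt_div_iff₀ hαR] at ha
      push_cast
      linarith)
    (by
      rw [hcard, ← pow_mul]
      refine pow_lt_of_lt_logb hq (by omega) ?_
      rw [lt_div_iff₀ (mul_pos hrR hαR)] at ht
      push_cast
      linarith)
  have hboundR := (Nat.cast_le (α := ℝ)).2 hbound
  push_cast [Nat.cast_sub (by omega : 1 ≤ δ)] at hboundR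
  rw [hceil_a, hceil_t]
  push_cast
  linarith

/-- **Singleton-like bound for (possibly non-linear) `(r, δ, α)` locally repairable
codes** (Theorem 2 of Rawat–Koyluoglu–Silberstein–Vishwanath).  For a code `C` of
length `n` over the alphabet `F^α` (with `|F| = q`) having `(r, δ)` locality and
`|C| ≥ 2`, writing `𝓜 = log_q |C|`, the minimum distance satisfies
`d_min(C) ≤ n - ⌈𝓜/α⌉ + 1 - (⌈𝓜/(rα)⌉ - 1)(δ - 1)`. -/
theorem lrc_minimum_distance_bound
    {F : Type} [Fintype F] [DecidableEq F]
    (n α r δ q : ℕ) (hn : 0 < n) (hα : 0 < α) (hr : 0 < r) (hδ : 2 ≤ δ) (hq : 2 ≤ q)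
    (hF : Fintype.card F = q)
    (C : Finset (Fin n → (Fin α → F))) (hC : 2 ≤ C.card)
    (hloc : HasLocality (↑C : Set (Fin n → (Fin α → F))) r δ) :
    (minDist (↑C : Set (Fin n → (Fin α → F))) : ℝ) ≤
      (n : ℝ) - ((⌈Real.logb q C.card / α⌉ : ℤ) : ℝ) + 1 -
        (((⌈Real.logb q C.card / (r * α)⌉ : ℤ) : ℝ) - 1) * ((δ : ℝ) - 1) :=
  lrc_minimum_distance_bound_general n α r δ q hα hr hδ hq hF C hC hloc
end

section
/- Let K be a finite field with a subfield F of cardinality q, let t, α, n̂ be positive integers with t ≤ n̂, and let y_1, …, y_{tα} ∈ K be linearly independent over F. Let 𝔣(y) = ∑_{i=1}^{L} a_i y^{q^{i−1}} (with a_i ∈ K) be a linearized polynomial over K, and let Ĝ ∈ F^{tα × n̂α} be a generator matrix of an [n̂, tα, n̂ − t + 1, α]_q MDS array code. Define ĉ = (𝔣(y_1), …, 𝔣(y_{tα})) · Ĝ ∈ K^{n̂α}. Then: (a) every coordinate of ĉ satisfies ĉ_j = 𝔣(ỹ_j), where ỹ_j := ∑_{i=1}^{tα} Ĝ_{i,j}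 y_i lies in the F-linear span of {y_1, …, y_{tα}}; and (b) for every set S of s blocks (1 ≤ s ≤ n̂), the F-linear span of { ỹ_j : j a column index belonging to a block in S } has dimension exactly min{s, t}·α. In other words, any s of the n̂ vector symbols of ĉ correspond to evaluations of 𝔣 at min{s, t}·α points of K that are linearly independent over F and lie in the span of {y_1, …, y_{tα}}. -/
/-!
Since `z ↦ z ^ q` is the Frobenius endomorphism of `K` over `F`, the linearized polynomial `𝔣` is
`F`-linear, so the coded symbols `ĉ_j = ∑ᵢ 𝔣(yᵢ) Gᵢⱼ` are the evaluations `𝔣(ỹⱼ)`. The points `ỹⱼ`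
are the images of the columns of `G` under the injective map `v ↦ ∑ᵢ vᵢ yᵢ`, so the columns in
any `t` blocks give `tα` independent points. A set of `s ≤ t` blocks sits inside such a set,
giving `sα` independent points; a set of `s ≥ t` blocks contains one, and all points lie in the
`tα`-dimensional span of the `yᵢ`.
-/

open Module Submodule

section LinearizedPolynomial

variable (F : Type*) {R ι : Type*} [Field F] [Fintype F] [CommRing R] [Algebra F R] [Fintype ι]

noncomputable def linearizedPolynomialMap (a : ι → R) (e : ι → ℕ) : R →ₗ[F] R :=
  ∑ i, a i • ((FiniteField.frobeniusAlgHom F R) ^ e i).toLinearMap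

theorem linearizedPolynomialMap_apply (a : ι → R) (e : ι → ℕ) (z : R) :
    linearizedPolynomialMap F a e z = ∑ i, a i * z ^ Fintype.card F ^ e i := by
  simp [linearizedPolynomialMap, FiniteField.coe_frobeniusAlgHom, pow_iterate]

end LinearizedPolynomial

theorem LinearMap.map_sum_algebraMap_mul {F A ι : Type*} [CommSemiring F] [Semiring A]
    [Algebra F A] (φ : A →ₗ[F] A) (s : Finset ι) (g : ι → F) (y : ι → A) :
    φ (∑ i ∈ s, algebraMap F A (g i) * y i) = ∑ i ∈ s, φ (y i) * algebraMap F A (g i) := by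
  simp only [← Algebra.smul_def, map_sum, map_smul, ← Algebra.commutes]

section Blocks

variable {F V ι β : Type*} [Field F] [AddCommGroup V] [Module F V]

theorem finrank_span_image_blocks_of_linearIndependent [Fintype β] {v : ι × β → V} {B : Finset ι}
    (hB : LinearIndependent F fun p : B × β => v (p.1, p.2)) :
    finrank F (span F (v '' {j | j.1 ∈ B})) = B.card * Fintype.card β := by
  have hrange : v '' {j | j.1 ∈ B} = Set.range fun p : B × β => v (p.1, p.2) := by
    ext x
    constructor
    · rintro ⟨j, hj, rfl⟩
      exact ⟨(⟨j.1, hj⟩, j.2), rfl⟩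
    · rintro ⟨p, rfl⟩
      exact ⟨(p.1, p.2), p.1.2, rfl⟩
  rw [hrange, finrank_span_eq_card hB, Fintype.card_prod, Fintype.card_coe]

theorem LinearIndependent.blocks_of_subset {v : ι × β → V} {S B : Finset ι} (hSB : S ⊆ B)
    (hB : LinearIndependent F fun p : B × β => v (p.1, p.2)) :
    LinearIndependent F fun p : S × β => v (p.1, p.2) :=
  hB.comp (Prod.map (fun i : S => (⟨i, hSB i.2⟩ : B)) id) <|
    Function.Injective.prodMap (fun _ _ h => Subtype.ext (Subtype.mk.inj h))
      Function.injective_id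

theorem finrank_span_image_blocks_eq_min_mul [Fintype ι] [Fintype β] {v : ι × β → V} {t : ℕ}
    (htι : t ≤ Fintype.card ι)
    (hspan : finrank F (span F (Set.range v)) ≤ t * Fintype.card β)
    (hind : ∀ B : Finset ι, B.card = t → LinearIndependent F fun p : B × β => v (p.1, p.2))
    (S : Finset ι) :
    finrank F (span F (v '' {j | j.1 ∈ S})) = min S.card t * Fintype.card β := by
  classical
  rcases le_total t S.card with htS | hSt
  · obtain ⟨B, hBS, hB⟩ := Finset.exists_subset_card_eq htS
    have := FiniteDimensional.span_of_finite F (Set.toFinite (v '' {j | j.1 ∈ S}))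
    have := FiniteDimensional.span_of_finite F (Set.finite_range v)
    have hlower := Submodule.finrank_mono (span_mono (Set.image_mono fun j hj => hBS hj) :
      span F (v '' {j | j.1 ∈ B}) ≤ span F (v '' {j | j.1 ∈ S}))
    have hupper :=
      Submodule.finrank_mono (span_mono (R := F) (Set.image_subset_range v {j | j.1 ∈ S}))
    rw [finrank_span_image_blocks_of_linearIndependent (hind B hB), hB] at hlower
    rw [min_eq_right htS]
    exact le_antisymm (hupper.trans hspan) hlower
  · obtain ⟨B, hSB, -, hB⟩ :=
      Finset.exists_subsuperset_card_eq (Finset.subset_univ S) hSt (by simpa using htι)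
    rw [min_eq_left hSt]
    exact finrank_span_image_blocks_of_linearIndependent ((hind B hB).blocks_of_subset hSB)

end Blocks

theorem Matrix.linearIndependent_col_of_rank_eq_card {F m n : Type*} [Field F] [Fintype n]
    (A : Matrix m n F) (h : A.rank = Fintype.card n) : LinearIndependent F A.col := by
  rw [linearIndependent_iff_card_eq_finrank_span, ← h, rank_eq_finrank_span_cols, Set.finrank]

theorem linearized_polynomial_mds_array_evaluations_general
    {F K : Type} [Field F] [Field K] [Algebra F K] [Fintype F]
    (q : ℕ) (hq : Fintype.card F = q)
    (t α nh L : ℕ) (htn : t ≤ nh)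
    (y : Fin (t * α) → K) (hy : LinearIndependent F y)
    (a : Fin L → K)
    (f : K → K) (hf : ∀ z, f z = ∑ i : Fin L, a i * z ^ q ^ (i : ℕ))
    (G : Matrix (Fin (t * α)) (Fin nh × Fin α) F)
    (hG : ∀ B : Finset (Fin nh), B.card = t →
      (G.submatrix id (fun pr : ↥B × Fin α => ((pr.1 : Fin nh), pr.2))).rank = t * α)
    (c : Fin nh × Fin α → K)
    (hc : ∀ j, c j = ∑ i, f (y i) * algebraMap F K (G i j))
    (ytil : Fin nh × Fin α → K)
    (hytil : ∀ j, ytil j = ∑ i, algebraMap F K (G i j) * y i) :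
    (∀ j, c j = f (ytil j) ∧ ytil j ∈ Submodule.span F (Set.range y)) ∧
    (∀ Sb : Finset (Fin nh), Sb.Nonempty →
      Module.finrank F ↥(Submodule.span F (ytil '' {pr | pr.1 ∈ Sb})) =
        min Sb.card t * α) := by
  subst hq
  set e := Fintype.linearCombination F y
  have he : Function.Injective e := hy.fintypeLinearCombination_injective
  have hytil_eq : ∀ j, ytil j = e (G.col j) := fun j => by
    simp [hytil, e, Fintype.linearCombination_apply, Algebra.smul_def]
  have hf_eq : f = linearizedPolynomialMap F a fun i => (i : ℕ) := by
    ext z; rw [hf, linearizedPolynomialMap_apply]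
  have hc_eq : ∀ j, c j = f (ytil j) := fun j => by
    rw [hc, hytil, hf_eq, LinearMap.map_sum_algebraMap_mul]
  have hmem : ∀ j, ytil j ∈ span F (Set.range y) := fun j => by
    rw [← Fintype.range_linearCombination, hytil_eq]
    exact LinearMap.mem_range_self e _
  have hspan : finrank F (span F (Set.range ytil)) ≤ t * Fintype.card (Fin α) := by
    have := FiniteDimensional.span_of_finite F (Set.finite_range y)
    calc finrank F (span F (Set.range ytil))
        ≤ finrank F (span F (Set.range y)) :=
          Submodule.finrank_mono (span_le.mpr (Set.range_subset_iff.mpr hmem))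
      _ = t * Fintype.card (Fin α) := by simp [finrank_span_eq_card hy]
  have hind (B : Finset (Fin nh)) (hB : B.card = t) :
      LinearIndependent F fun p : B × Fin α => ytil (p.1, p.2) := by
    have hcols := (G.submatrix id fun p : B × Fin α => ((p.1 : Fin nh), p.2)
      ).linearIndependent_col_of_rank_eq_card <| by
      rw [hG B hB, Fintype.card_prod, Fintype.card_coe, hB, Fintype.card_fin]
    simp only [hytil_eq]
    exact hcols.map' e (LinearMap.ker_eq_bot.mpr he)
  refine ⟨fun j => ⟨hc_eq j, hmem j⟩, fun S _ => ?_⟩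
  simpa using finrank_span_image_blocks_eq_min_mul (by simpa using htn) hspan hind S

/-- **Evaluations of a linearized polynomial after MDS array pre-coding remain
evaluations at linearly independent points** (Lemma 3 of
Rawat–Koyluoglu–Silberstein–Vishwanath).  `K` is a finite field with subfield `F` of
cardinality `q` (modelled by the extension `Algebra F K`); `f` is the evaluation map of
a linearized polynomial `𝔣(y) = ∑ a_i y^{q^{i-1}}`; `y_1, …, y_{tα} ∈ K` are linearly
independent over `F`; and `G` is a generator matrix (entries in `F`, columns grouped
into `nh` blocks of `α`) of an `[nh, tα, nh - t + 1, α]_q` MDS array code, i.e. every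
`tα × tα` submatrix formed by `t` blocks of columns is of full rank `tα`.  Let
`ĉ = (𝔣(y_1), …, 𝔣(y_{tα})) · G`.  Then (a) each `ĉ_j = 𝔣(ỹ_j)` with
`ỹ_j = ∑_i G_{i,j} y_i` in the `F`-span of the `y_i`; and (b) for every nonempty set
`S` of blocks, the `F`-span of the points `ỹ_j` with `j` in a block of `S` has
dimension exactly `min{|S|, t}·α`. -/
theorem linearized_polynomial_mds_array_evaluations
    {F K : Type} [Field F] [Field K] [Algebra F K] [Fintype F] [Fintype K]
    (q : ℕ) (hq : Fintype.card F = q)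
    (t α nh L : ℕ) (ht : 0 < t) (hα : 0 < α) (htn : t ≤ nh)
    (y : Fin (t * α) → K) (hy : LinearIndependent F y)
    (a : Fin L → K)
    (f : K → K) (hf : ∀ z, f z = ∑ i : Fin L, a i * z ^ q ^ (i : ℕ))
    (G : Matrix (Fin (t * α)) (Fin nh × Fin α) F)
    (hG : ∀ B : Finset (Fin nh), B.card = t →
      (G.submatrix id (fun pr : ↥B × Fin α => ((pr.1 : Fin nh), pr.2))).rank = t * α)
    (c : Fin nh × Fin α → K)
    (hc : ∀ j, c j = ∑ i, f (y i) * algebraMap F K (G i j))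
    (ytil : Fin nh × Fin α → K)
    (hytil : ∀ j, ytil j = ∑ i, algebraMap F K (G i j) * y i) :
    (∀ j, c j = f (ytil j) ∧ ytil j ∈ Submodule.span F (Set.range y)) ∧
    (∀ Sb : Finset (Fin nh), Sb.Nonempty →
      Module.finrank F ↥(Submodule.span F (ytil '' {pr | pr.1 ∈ Sb})) =
        min Sb.card t * α) :=
  linearized_polynomial_mds_array_evaluations_general q hq t α nh L htn y hy a f hf G hG c hc ytil
    hytil
end

section
/- Let K be a finite field with a subfield F of cardinality q and [K : F] = m; let g, r, α be positive integers and δ ≥ 2 an integer with m ≥ g·r·α; and let y_1, …, y_{grα} ∈ K be linearly independent over F. Let 𝔣 be the evaluation map of a linearized polynomial over K. For each group i ∈ {1, …, g}, let Ĝ_i ∈ F^{rα × (r+δ−1)α} be a generator matrix of an [r+δ−1, rα, δ, α]_q MDS array code, and let node u ∈ {1, …, r+δ−1} of group i store the u-th block of α entries of the vector (𝔣(y_{(i−1)rα+1}), …, 𝔣(y_{irα})) · Ĝ_i ∈ K^{(r+δ−1)α}. Then for any integers s_1, …, s_g with 0 ≤ s_i ≤ r+δ−1 and any choice of s_i nodes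 from group i for each i, every symbol stored on the chosen nodes equals 𝔣(z) for some point z in the F-linear span of {y_1, …, y_{grα}}, and the F-linear span of the evaluation points associated with all chosen nodes has dimension exactly ∑_{i=1}^{g} min{s_i, r}·α. -/
/-!
Since `z ↦ z ^ q` is `F`-linear on `K`, so is `𝔣`, and each stored symbol is `𝔣` of the
matching `F`-combination `ỹ` of its group's points. In group `i` the points `ỹ` are the images
of the columns of `Ĝᵢ` under the injective map `e ↦ ∑ e_w y_{i,w}`, so their span has the
dimension of the span of the chosen column blocks, which is `min(sᵢ, r)·α` by the MDS property:
at most `r` blocks are independent, `r` blocks already span everything. The points of different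
groups lie in the independent subspaces `span (y i)`, so the dimensions add up.
-/

open Module Submodule

namespace FiniteField

variable (F : Type*) {K : Type*} [Field F] [Fintype F] [Field K] [Algebra F K]

noncomputable def linearizedMap {L : ℕ} (a : Fin L → K) : K →ₗ[F] K :=
  ∑ i : Fin L, a i • ((frobeniusAlgHom F K) ^ (i : ℕ)).toLinearMap

theorem linearizedMap_apply {L : ℕ} (a : Fin L → K) (z : K) :
    linearizedMap F a z = ∑ i : Fin L, a i * z ^ Fintype.card F ^ (i : ℕ) := by
  simp [linearizedMap, AlgHom.coe_pow, coe_frobeniusAlgHom, pow_iterate]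

end FiniteField

theorem LinearIndependent.iSupIndep_span_range_curry {R M ι κ : Type*} [Semiring R]
    [AddCommMonoid M] [Module R M] {v : ι → κ → M}
    (hv : LinearIndependent R fun p : ι × κ => v p.1 p.2) :
    iSupIndep fun i => span R (Set.range (v i)) := by
  refine iSupIndep_def.2 fun i => ?_
  refine (hv.disjoint_span_image (s := {p | p.1 = i}) (t := {p | p.1 ≠ i})
    (Set.disjoint_left.2 fun p hp hp' => hp' hp)).mono ?_ ?_
  · exact span_mono <| by rintro _ ⟨k, rfl⟩; exact ⟨(i, k), rfl, rfl⟩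
  · exact iSup₂_le fun j hj => span_mono <| by rintro _ ⟨k, rfl⟩; exact ⟨(j, k), hj, rfl⟩

theorem iSupIndep.finrank_iSup {K V ι : Type*} [Field K] [AddCommGroup V] [Module K V]
    [FiniteDimensional K V] [Fintype ι] {p : ι → Submodule K V} (hp : iSupIndep p) :
    finrank K ↥(⨆ i, p i) = ∑ i, finrank K (p i) := by
  classical
  rw [iSup_eq_range_dfinsupp_lsum, LinearMap.finrank_range_of_inj hp.dfinsupp_lsum_injective]
  exact finrank_directSum K fun i => p i

namespace Matrix

theorem range_col_blocks {n ι κ α : Type*} (G : Matrix n (ι × κ) α) (B : Finset ι) :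
    Set.range (fun p : B × κ => G.col ((p.1 : ι), p.2)) = G.col '' {j | j.1 ∈ B} := by
  ext; simp

variable {F n ι κ : Type*} [Field F] [Fintype κ]

def IsMDSArray (G : Matrix n (ι × κ) F) (r : ℕ) : Prop :=
  ∀ B : Finset ι, B.card = r →
    (G.submatrix id fun p : B × κ => ((p.1 : ι), p.2)).rank = r * Fintype.card κ

variable {G : Matrix n (ι × κ) F} {r : ℕ}

theorem IsMDSArray.linearIndependent_col_blocks [Fintype ι] (hG : G.IsMDSArray r)
    (hr : r ≤ Fintype.card ι) {B : Finset ι} (hB : B.card ≤ r) :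
    LinearIndependent F fun p : B × κ => G.col ((p.1 : ι), p.2) := by
  obtain ⟨C, hBC, hC⟩ := Finset.exists_superset_card_eq hB hr
  have hCind : LinearIndependent F fun p : C × κ => G.col ((p.1 : ι), p.2) := by
    rw [linearIndependent_iff_card_eq_finrank_span, Fintype.card_prod, Fintype.card_coe, hC,
      ← hG C hC, rank_eq_finrank_span_cols]
    rfl
  have hinc : Function.Injective fun p : B × κ => ((⟨p.1, hBC p.1.2⟩ : C), p.2) := by
    rintro ⟨⟨b, hb⟩, k⟩ ⟨⟨b', hb'⟩, k'⟩ h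
    simp only [Prod.mk.injEq, Subtype.mk.injEq] at h
    obtain ⟨rfl, rfl⟩ := h
    rfl
  exact (hCind.comp _ hinc :)

theorem IsMDSArray.span_col_blocks_eq_top [Fintype n] (hG : G.IsMDSArray r)
    (hn : Fintype.card n = r * Fintype.card κ) {B : Finset ι} (hB : B.card = r) :
    span F (G.col '' {j | j.1 ∈ B}) = ⊤ := by
  refine eq_top_of_finrank_eq ?_
  rw [← range_col_blocks, finrank_fintype_fun_eq_card, hn, ← hG B hB, rank_eq_finrank_span_cols]
  rfl

theorem IsMDSArray.finrank_span_col_blocks [Fintype n] [Fintype ι] (hG : G.IsMDSArray r)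
    (hn : Fintype.card n = r * Fintype.card κ) (hr : r ≤ Fintype.card ι) (A : Finset ι) :
    finrank F (span F (G.col '' {j | j.1 ∈ A})) = min A.card r * Fintype.card κ := by
  rcases le_total A.card r with h | h
  · rw [min_eq_left h, ← range_col_blocks,
      finrank_span_eq_card (hG.linearIndependent_col_blocks hr h), Fintype.card_prod,
      Fintype.card_coe]
  · obtain ⟨B, hBA, hB⟩ := Finset.exists_subset_card_eq h
    have hle : span F (G.col '' {j | j.1 ∈ B}) ≤ span F (G.col '' {j | j.1 ∈ A}) :=
      span_mono <| Set.image_mono fun j hj => hBA hj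
    rw [min_eq_right h, eq_top_iff.2 ((hG.span_col_blocks_eq_top hn hB).symm.trans_le hle),
      finrank_top, finrank_fintype_fun_eq_card, hn]

end Matrix

theorem grouped_lrc_evaluation_points_general
    {F K : Type} [Field F] [Field K] [Algebra F K] [Fintype F] [Fintype K]
    (q g r α δ L : ℕ) (hq : Fintype.card F = q)
    (hδ : 2 ≤ δ)
    (y : Fin g → Fin (r * α) → K)
    (hy : LinearIndependent F (fun pr : Fin g × Fin (r * α) => y pr.1 pr.2))
    (a : Fin L → K)
    (f : K → K) (hf : ∀ z, f z = ∑ i : Fin L, a i * z ^ q ^ (i : ℕ))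
    (G : Fin g → Matrix (Fin (r * α)) (Fin (r + δ - 1) × Fin α) F)
    (hG : ∀ i, ∀ B : Finset (Fin (r + δ - 1)), B.card = r →
      ((G i).submatrix id
        (fun pr : ↥B × Fin α => ((pr.1 : Fin (r + δ - 1)), pr.2))).rank = r * α)
    (c : Fin g → Fin (r + δ - 1) × Fin α → K)
    (hc : ∀ i j, c i j = ∑ w, f (y i w) * algebraMap F K (G i w j))
    (ytil : Fin g → Fin (r + δ - 1) × Fin α → K)
    (hytil : ∀ i j, ytil i j = ∑ w, algebraMap F K (G i w j) * y i w)
    (A : Fin g → Finset (Fin (r + δ - 1))) :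
    (∀ i j, c i j = f (ytil i j) ∧
      ytil i j ∈ Submodule.span F
        (Set.range fun pr : Fin g × Fin (r * α) => y pr.1 pr.2)) ∧
    Module.finrank F ↥(Submodule.span F
        {x : K | ∃ i : Fin g, ∃ j : Fin (r + δ - 1) × Fin α, j.1 ∈ A i ∧ x = ytil i j}) =
      ∑ i : Fin g, min (A i).card r * α := by
  set φ := fun i => Fintype.linearCombination F (y i)
  have hφ : ∀ i, Function.Injective (φ i) := fun i =>
    (hy.comp (Prod.mk i) (Prod.mk_right_injective i)).fintypeLinearCombination_injective
  have hytil_eq : ∀ i j, ytil i j = φ i ((G i).col j) := fun i j => by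
    simp [φ, hytil, Fintype.linearCombination_apply, Algebra.smul_def]
  have hf_eq : f = FiniteField.linearizedMap F a :=
    funext fun z => by rw [hf, FiniteField.linearizedMap_apply, hq]
  refine ⟨fun i j => ⟨?_, ?_⟩, ?_⟩
  · rw [hc, hytil, hf_eq, map_sum]
    refine Finset.sum_congr rfl fun w _ => ?_
    rw [← Algebra.smul_def, map_smul, Algebra.smul_def, mul_comm]
  · rw [hytil_eq]
    exact span_mono (Set.range_comp_subset_range (Prod.mk i) _)
      (Fintype.range_linearCombination F (y i) ▸ LinearMap.mem_range_self _ _)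
  · have hpoints : {x : K | ∃ i, ∃ j : Fin (r + δ - 1) × Fin α, j.1 ∈ A i ∧ x = ytil i j} =
        ⋃ i, φ i '' ((G i).col '' {j | j.1 ∈ A i}) := by
      ext; simp [hytil_eq, eq_comm]
    have hspan_le : ∀ i, span F (φ i '' ((G i).col '' {j | j.1 ∈ A i})) ≤
        span F (Set.range (y i)) := fun i =>
      span_le.2 <| (Set.image_subset_range _ _).trans <|
        (Fintype.range_linearCombination F (y i)).le
    have hMDS : ∀ i, (G i).IsMDSArray r := fun i B hB => by simpa using hG i B hB
    have hblocks : r ≤ Fintype.card (Fin (r + δ - 1)) := by simp only [Fintype.card_fin]; omega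
    rw [hpoints, span_iUnion, (hy.iSupIndep_span_range_curry.mono hspan_le).finrank_iSup]
    refine Finset.sum_congr rfl fun i _ => ?_
    rw [span_image, ← (equivMapOfInjective _ (hφ i) _).finrank_eq,
      (hMDS i).finrank_span_col_blocks (by simp) hblocks, Fintype.card_fin]

/-- **Evaluation points of the grouped (Gabidulin + MDS array) locally repairable code
construction** (Lemma 6 of Rawat–Koyluoglu–Silberstein–Vishwanath).  `K` is a finite
field with subfield `F` of cardinality `q` and `[K : F] = m ≥ g r α` (the subfield is
modelled by the extension `Algebra F K`); `f` is the evaluation map of a linearized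
polynomial; the `g r α` points `y i w` are linearly independent over `F`; for each
group `i`, `G i` is a generator matrix of an `[r + δ - 1, r α, δ, α]_q` MDS array code
(every `r` blocks of columns give a full-rank `rα × rα` submatrix), and node `u` of
group `i` stores the `u`-th block of `(f (y i 1), …, f (y i (rα))) · G i`, i.e. the
symbols `c i (u, v)`.  Then every stored symbol satisfies `c i j = f (ỹ i j)` with
`ỹ i j` in the `F`-span of the `y`'s, and for any choice `A i` of nodes in each group
the `F`-span of the evaluation points of the chosen nodes has dimension exactly
`∑ i, min{|A i|, r}·α`. -/
theorem grouped_lrc_evaluation_points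
    {F K : Type} [Field F] [Field K] [Algebra F K] [Fintype F] [Fintype K]
    (q m g r α δ L : ℕ) (hq : Fintype.card F = q) (hm : Module.finrank F K = m)
    (hg : 0 < g) (hr : 0 < r) (hα : 0 < α) (hδ : 2 ≤ δ)
    (hmN : g * r * α ≤ m)
    (y : Fin g → Fin (r * α) → K)
    (hy : LinearIndependent F (fun pr : Fin g × Fin (r * α) => y pr.1 pr.2))
    (a : Fin L → K)
    (f : K → K) (hf : ∀ z, f z = ∑ i : Fin L, a i * z ^ q ^ (i : ℕ))
    (G : Fin g → Matrix (Fin (r * α)) (Fin (r + δ - 1) × Fin α) F)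
    (hG : ∀ i, ∀ B : Finset (Fin (r + δ - 1)), B.card = r →
      ((G i).submatrix id
        (fun pr : ↥B × Fin α => ((pr.1 : Fin (r + δ - 1)), pr.2))).rank = r * α)
    (c : Fin g → Fin (r + δ - 1) × Fin α → K)
    (hc : ∀ i j, c i j = ∑ w, f (y i w) * algebraMap F K (G i w j))
    (ytil : Fin g → Fin (r + δ - 1) × Fin α → K)
    (hytil : ∀ i j, ytil i j = ∑ w, algebraMap F K (G i w j) * y i w)
    (A : Fin g → Finset (Fin (r + δ - 1))) :
    (∀ i j, c i j = f (ytil i j) ∧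
      ytil i j ∈ Submodule.span F
        (Set.range fun pr : Fin g × Fin (r * α) => y pr.1 pr.2)) ∧
    Module.finrank F ↥(Submodule.span F
        {x : K | ∃ i : Fin g, ∃ j : Fin (r + δ - 1) × Fin α, j.1 ∈ A i ∧ x = ytil i j}) =
      ∑ i : Fin g, min (A i).card r * α :=
  grouped_lrc_evaluation_points_general q g r α δ L hq hδ y hy a f hf G hG c hc ytil hytil A
end

section
/- Let r ≥ 1, δ ≥ 2, α ≥ 1 and n be integers with (r+δ−1) | n, and let 𝓜 be a positive multiple of α with 𝓜 ≤ n·r·α/(r+δ−1). Define d = n − 𝓜/α + 1 − (⌈𝓜/(r·α)⌉ − 1)·(δ−1), μ = ⌊(n − d + 1)/(r+δ−1)⌋, and h = n − d + 1 − (r+δ−1)·μ. Then μ·r·α + min{h, r}·α = 𝓜. (That is, a minimum-distance-optimal locally repairable code whose local groups are minimum storage regenerating codes attains, with equality, the file-size bound 𝓜 ≤ μ·r·α + min{h, r}·α for repair-bandwidth-efficient locally repairable codes.) -/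
/-!
Write `M = α m` and `k = ⌈m / r⌉`, so that `e = m - (k - 1) r` satisfies `0 < e ≤ r`. Then
`n - d + 1 = m + (k - 1)(δ - 1) = (k - 1)(r + δ - 1) + e`, and since `e < r + δ - 1` this is the
division with remainder by `r + δ - 1`: `μ = k - 1` and `h = e ≤ r`. Hence
`μ r α + min{h, r} α = ((k - 1) r + e) α = m α = M`.
-/

section CeilDiv

variable {K : Type*} [Field K] [LinearOrder K] [IsStrictOrderedRing K] [FloorRing K]
  {x r : K}

theorem sub_ceil_div_sub_one_mul_pos (hr : 0 < r) : 0 < x - (⌈x / r⌉ - 1) * r := by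
  have : (⌈x / r⌉ : K) - 1 < x / r := by linarith [Int.ceil_lt_add_one (x / r)]
  linarith [(lt_div_iff₀ hr).mp this]

theorem sub_ceil_div_sub_one_mul_le (hr : 0 < r) : x - (⌈x / r⌉ - 1) * r ≤ r := by
  linarith [(div_le_iff₀ hr).mp (Int.le_ceil (x / r))]

theorem floor_add_ceil_div_sub_one_mul_div {s : K} (hr : 0 < r) (hs : 0 < s) :
    ⌊(x + (⌈x / r⌉ - 1) * s) / (r + s)⌋ = ⌈x / r⌉ - 1 := by
  have hpos := sub_ceil_div_sub_one_mul_pos (x := x) hr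
  have hle := sub_ceil_div_sub_one_mul_le (x := x) hr
  rw [Int.floor_eq_iff, le_div_iff₀ (by linarith), div_lt_iff₀ (by linarith)]
  push_cast
  constructor <;> nlinarith

end CeilDiv

theorem msr_lrc_file_size_optimal_general
    (r δ α n M : ℕ) (hr : 1 ≤ r) (hδ : 2 ≤ δ) (hα : 1 ≤ α)
    (hαM : α ∣ M)
    (d μ h : ℤ)
    (hd : d = (n : ℤ) - (M / α : ℕ) + 1 - (⌈(M : ℚ) / (r * α)⌉ - 1) * ((δ : ℤ) - 1))
    (hμ : μ = ⌊((n : ℚ) - (d : ℚ) + 1) / ((r : ℚ) + (δ : ℚ) - 1)⌋)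
    (hh : h = (n : ℤ) - d + 1 - ((r : ℤ) + (δ : ℤ) - 1) * μ) :
    μ * r * α + min h (r : ℤ) * α = (M : ℤ) := by
  obtain ⟨m, rfl⟩ := hαM
  have hrQ : (0 : ℚ) < r := by exact_mod_cast hr
  have hceil : ⌈((α * m : ℕ) : ℚ) / (r * α)⌉ = ⌈(m : ℚ) / r⌉ := by
    push_cast
    rw [mul_comm (r : ℚ), mul_div_mul_left _ _ (by positivity)]
  rw [Nat.mul_div_cancel_left m hα, hceil] at hd
  set k := ⌈(m : ℚ) / r⌉ with hk
  have hμk : μ = k - 1 := by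
    have hs : (0 : ℚ) < δ - 1 := by
      have : (2 : ℚ) ≤ δ := by exact_mod_cast hδ
      linarith
    rw [hμ, hk, ← floor_add_ceil_div_sub_one_mul_div hrQ hs, ← hk, hd]
    push_cast
    ring_nf
  have hhk : h = m - (k - 1) * r := by rw [hh, hμk, hd]; ring
  have hhr : h ≤ r := by
    have hle : ((m - (k - 1) * r : ℤ) : ℚ) ≤ r := by
      push_cast
      exact sub_ceil_div_sub_one_mul_le hrQ
    rw [hhk]
    exact_mod_cast hle
  rw [min_eq_left hhr, hhk, hμk]
  push_cast
  ring

/-- **Minimum-distance-optimal MSR-LRCs attain the file-size bound for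
repair-bandwidth-efficient locally repairable codes with equality**
(Theorem 6 of Rawat–Koyluoglu–Silberstein–Vishwanath).  Let `(r + δ - 1) ∣ n`, let `𝓜`
be a positive multiple of `α` with `𝓜 ≤ n r α/(r + δ - 1)`, and set
`d = n - 𝓜/α + 1 - (⌈𝓜/(rα)⌉ - 1)(δ - 1)` (the optimal minimum distance),
`μ = ⌊(n - d + 1)/(r + δ - 1)⌋` and `h = n - d + 1 - (r + δ - 1)μ`.  Then
`μ r α + min{h, r} α = 𝓜`. -/
theorem msr_lrc_file_size_optimal
    (r δ α n M : ℕ) (hr : 1 ≤ r) (hδ : 2 ≤ δ) (hα : 1 ≤ α)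
    (hdvd : (r + δ - 1) ∣ n) (hM0 : 0 < M) (hαM : α ∣ M)
    (hMN : M * (r + δ - 1) ≤ n * r * α)
    (d μ h : ℤ)
    (hd : d = (n : ℤ) - (M / α : ℕ) + 1 - (⌈(M : ℚ) / (r * α)⌉ - 1) * ((δ : ℤ) - 1))
    (hμ : μ = ⌊((n : ℚ) - (d : ℚ) + 1) / ((r : ℚ) + (δ : ℚ) - 1)⌋)
    (hh : h = (n : ℤ) - d + 1 - ((r : ℤ) + (δ : ℤ) - 1) * μ) :
    μ * r * α + min h (r : ℤ) * α = (M : ℤ) :=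
  msr_lrc_file_size_optimal_general r δ α n M hr hδ hα hαM d μ h hd hμ hh
end

section
/- Let f, r, e be random variables taking values in finite sets on a common probability space. If f and r are independent, H(e) ≤ H(r), and H(r | f, e) = 0, then I(f; e) = 0; that is, the mutual information leakage of f to the observation e is zero (equivalently, f and e are independent). -/
/-!
Since `f` and `r` are independent and `r` is a function of `(f, e)`,
`H(f) + H(r) = H(f, r) ≤ H(r, f, e) = H(f, e) ≤ H(f) + H(e) ≤ H(f) + H(r)`,
so subadditivity `H(f, e) ≤ H(f) + H(e)` holds with equality, which is `I(f; e) = 0`.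
-/

/-- `p` is a probability mass function on the finite sample space `Ω`. -/
def IsPMF {Ω : Type} [Fintype Ω] (p : Ω → ℝ) : Prop :=
  (∀ ω, 0 ≤ p ω) ∧ ∑ ω, p ω = 1

/-- Probability that the random variable `X` takes the value `x`. -/
noncomputable def prEq {Ω : Type} [Fintype Ω] (p : Ω → ℝ) {S : Type} [DecidableEq S]
    (X : Ω → S) (x : S) : ℝ :=
  ∑ ω, if X ω = x then p ω else 0

/-- Shannon entropy (base `b`) of the random variable `X` on the finite probability
space `(Ω, p)`.  Terms with probability `0` vanish since `Real.logb b 0 = 0`. -/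
noncomputable def entH {Ω : Type} [Fintype Ω] (b : ℝ) (p : Ω → ℝ) {S : Type}
    [Fintype S] [DecidableEq S] (X : Ω → S) : ℝ :=
  -∑ x, prEq p X x * Real.logb b (prEq p X x)

/-- Conditional entropy `H(X | Y) = H(X, Y) - H(Y)`. -/
noncomputable def condH {Ω : Type} [Fintype Ω] (b : ℝ) (p : Ω → ℝ) {S T : Type}
    [Fintype S] [DecidableEq S] [Fintype T] [DecidableEq T]
    (X : Ω → S) (Y : Ω → T) : ℝ :=
  entH b p (fun ω => (X ω, Y ω)) - entH b p Y

/-- Mutual information `I(X; Y) = H(X) + H(Y) - H(X, Y)`. -/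
noncomputable def mutI {Ω : Type} [Fintype Ω] (b : ℝ) (p : Ω → ℝ) {S T : Type}
    [Fintype S] [DecidableEq S] [Fintype T] [DecidableEq T]
    (X : Ω → S) (Y : Ω → T) : ℝ :=
  entH b p X + entH b p Y - entH b p (fun ω => (X ω, Y ω))

/-- Independence of two random variables on a finite probability space. -/
def IndepRV {Ω : Type} [Fintype Ω] (p : Ω → ℝ) {S T : Type} [DecidableEq S] [DecidableEq T]
    (X : Ω → S) (Y : Ω → T) : Prop :=
  ∀ x y, prEq p (fun ω => (X ω, Y ω)) (x, y) = prEq p X x * prEq p Y y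

open Real Finset

lemma sub_le_mul_log_sub_log {a s : ℝ} (ha : 0 ≤ a) (hs : 0 ≤ s) (has : 0 < a → 0 < s) :
    a - s ≤ a * (log a - log s) := by
  rcases ha.eq_or_lt with rfl | ha
  · simpa using hs
  have hs := has ha
  have h := one_sub_inv_le_log_of_pos (div_pos ha hs)
  rw [log_div ha.ne' hs.ne', inv_div] at h
  calc a - s = a * (1 - s / a) := by field_simp
    _ ≤ a * (log a - log s) := mul_le_mul_of_nonneg_left h ha.le

/-- Gibbs' inequality. -/
lemma sum_mul_logb_le_sum_mul_logb {ι : Type} [Fintype ι] {b : ℝ} (hb : 1 < b) {q s : ι → ℝ}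
    (hq : ∀ i, 0 ≤ q i) (hs : ∀ i, 0 ≤ s i) (hqs : ∀ i, 0 < q i → 0 < s i)
    (hsum : ∑ i, s i ≤ ∑ i, q i) :
    ∑ i, q i * logb b (s i) ≤ ∑ i, q i * logb b (q i) := by
  have hlog : ∑ i, q i * log (s i) ≤ ∑ i, q i * log (q i) := by
    have := sum_le_sum fun i (_ : i ∈ univ) => sub_le_mul_log_sub_log (hq i) (hs i) (hqs i)
    simp only [sum_sub_distrib, mul_sub] at this
    linarith
  simp only [logb, mul_div_assoc', ← sum_div]
  exact div_le_div_of_nonneg_right hlog (log_pos hb).le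

section Entropy

variable {Ω S T : Type} [Fintype Ω] [DecidableEq S] [DecidableEq T]

lemma prEq_nonneg {p : Ω → ℝ} (hp : ∀ ω, 0 ≤ p ω) (X : Ω → S) (x : S) : 0 ≤ prEq p X x :=
  sum_nonneg fun ω _ => by split_ifs <;> simp [hp ω]

lemma prEq_le_prEq {p : Ω → ℝ} (hp : ∀ ω, 0 ≤ p ω) {X : Ω → S} {Y : Ω → T} {x : S} {y : T}
    (hXY : ∀ ω, X ω = x → Y ω = y) : prEq p X x ≤ prEq p Y y := by
  refine sum_le_sum fun ω _ => ?_
  by_cases hx : X ω = x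
  · simp [hx, hXY ω hx]
  · simp only [hx, if_false]
    split_ifs <;> simp [hp ω]

lemma le_prEq_apply {p : Ω → ℝ} (hp : ∀ ω, 0 ≤ p ω) (X : Ω → S) (ω : Ω) :
    p ω ≤ prEq p X (X ω) := by
  have := single_le_sum (f := fun ω' => if X ω' = X ω then p ω' else 0)
    (fun ω' _ => by split_ifs <;> simp [hp ω']) (mem_univ ω)
  simpa [prEq] using this

variable [Fintype S] [Fintype T]

lemma sum_prEq_mul (p : Ω → ℝ) (X : Ω → S) (φ : S → ℝ) :
    ∑ x, prEq p X x * φ x = ∑ ω, p ω * φ (X ω) := by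
  simp only [prEq, sum_mul, ite_mul, zero_mul]
  rw [sum_comm]
  simp

lemma sum_prEq (p : Ω → ℝ) (X : Ω → S) : ∑ x, prEq p X x = ∑ ω, p ω := by
  simpa using sum_prEq_mul p X 1

lemma entH_eq_neg_sum (b : ℝ) (p : Ω → ℝ) (X : Ω → S) :
    entH b p X = -∑ ω, p ω * logb b (prEq p X (X ω)) := by
  rw [entH, sum_prEq_mul p X fun x => logb b (prEq p X x)]

lemma entH_comp_le {b : ℝ} (hb : 1 < b) {p : Ω → ℝ} (hp : ∀ ω, 0 ≤ p ω) (X : Ω → S)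
    (g : S → T) : entH b p (fun ω => g (X ω)) ≤ entH b p X := by
  rw [entH_eq_neg_sum, entH_eq_neg_sum, neg_le_neg_iff]
  refine sum_le_sum fun ω _ => ?_
  rcases (hp ω).eq_or_lt with h | h
  · simp [← h]
  refine mul_le_mul_of_nonneg_left (logb_le_logb_of_le hb ?_ ?_) h.le
  · exact h.trans_le (le_prEq_apply hp X ω)
  · exact prEq_le_prEq hp fun ω' h' => by rw [h']

lemma entH_pair_of_indep (b : ℝ) {p : Ω → ℝ} (hp : ∀ ω, 0 ≤ p ω) (X : Ω → S) (Y : Ω → T)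
    (hXY : IndepRV p X Y) :
    entH b p (fun ω => (X ω, Y ω)) = entH b p X + entH b p Y := by
  simp only [entH_eq_neg_sum b p, ← neg_add, ← sum_add_distrib, ← mul_add]
  congr 1
  refine sum_congr rfl fun ω _ => ?_
  rcases (hp ω).eq_or_lt with h | h
  · simp [← h]
  rw [hXY (X ω) (Y ω), logb_mul (h.trans_le (le_prEq_apply hp X ω)).ne'
    (h.trans_le (le_prEq_apply hp Y ω)).ne']

/-- Gibbs' inequality against the product of the marginals. -/
lemma entH_pair_le {b : ℝ} (hb : 1 < b) {p : Ω → ℝ} (hp : IsPMF p) (X : Ω → S) (Y : Ω → T) :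
    entH b p (fun ω => (X ω, Y ω)) ≤ entH b p X + entH b p Y := by
  set q := prEq p fun ω => (X ω, Y ω) with hq_def
  have hq : ∀ z, 0 ≤ q z := prEq_nonneg hp.1 _
  have hX : ∀ z : S × T, q z ≤ prEq p X z.1 := fun z => prEq_le_prEq hp.1 fun ω h => by rw [← h]
  have hY : ∀ z : S × T, q z ≤ prEq p Y z.2 := fun z => prEq_le_prEq hp.1 fun ω h => by rw [← h]
  have hsum : ∑ z : S × T, prEq p X z.1 * prEq p Y z.2 ≤ ∑ z, q z := by
    rw [Fintype.sum_prod_type, hq_def, sum_prEq]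
    simp only [← mul_sum, ← sum_mul, sum_prEq, hp.2, one_mul, le_refl]
  have gibbs := sum_mul_logb_le_sum_mul_logb hb hq
    (fun z => mul_nonneg ((hq z).trans (hX z)) ((hq z).trans (hY z)))
    (fun z h => mul_pos (h.trans_le (hX z)) (h.trans_le (hY z))) hsum
  have hsplit : ∀ z : S × T, q z * logb b (prEq p X z.1 * prEq p Y z.2)
      = q z * logb b (prEq p X z.1) + q z * logb b (prEq p Y z.2) := by
    intro z
    rcases (hq z).eq_or_lt with h | h
    · simp [← h]
    rw [logb_mul (h.trans_le (hX z)).ne' (h.trans_le (hY z)).ne', mul_add]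
  simp only [hsplit, sum_add_distrib] at gibbs
  rw [hq_def, sum_prEq_mul p (fun ω => (X ω, Y ω)) fun z => logb b (prEq p X z.1),
    sum_prEq_mul p (fun ω => (X ω, Y ω)) fun z => logb b (prEq p Y z.2)] at gibbs
  rw [entH_eq_neg_sum b p X, entH_eq_neg_sum b p Y, entH]
  linarith

end Entropy

/-- **Secrecy Lemma.**  If the information `f` and the random bits `r` are independent,
`H(e) ≤ H(r)`, and `H(r | f, e) = 0`, then the leakage to the eavesdropper is zero:
`I(f; e) = 0`. -/
theorem secrecy_lemma
    {Ω F R E : Type} [Fintype Ω] [Fintype F] [DecidableEq F]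
    [Fintype R] [DecidableEq R] [Fintype E] [DecidableEq E]
    (b : ℝ) (hb : 1 < b) (p : Ω → ℝ) (hp : IsPMF p)
    (f : Ω → F) (r : Ω → R) (e : Ω → E)
    (hindep : IndepRV p f r)
    (hHe : entH b p e ≤ entH b p r)
    (hHr : condH b p r (fun ω => (f ω, e ω)) = 0) :
    mutI b p f e = 0 := by
  have hfr : entH b p (fun ω => (f ω, r ω)) = entH b p f + entH b p r :=
    entH_pair_of_indep b hp.1 f r hindep
  have hfr_le : entH b p (fun ω => (f ω, r ω)) ≤ entH b p (fun ω => (r ω, (f ω, e ω))) :=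
    entH_comp_le hb hp.1 (fun ω => (r ω, (f ω, e ω))) fun z => (z.2.1, z.1)
  have hrfe : entH b p (fun ω => (r ω, (f ω, e ω))) = entH b p (fun ω => (f ω, e ω)) :=
    sub_eq_zero.mp hHr
  have hfe : entH b p (fun ω => (f ω, e ω)) ≤ entH b p f + entH b p e :=
    entH_pair_le hb hp f e
  rw [mutI]
  linarith
end
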